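/- arXiv:0911.1809 — 2 statements merged into one kernel-verified Lean document; each statement's English description precedes it below -/
import Mathlib

section
/- Let {u_1, …, u_m} ⊆ ℤ^d be a nice set of non-zero vectors. There exists a constant N ∈ ℕ, depending only on the set {u_1, …, u_m}, such that for every unit vector l ∈ ℝ^d there exist an integer s ≤ N and vectors x_1, x_2, …, x_s ∈ {u_1, …, u_m} with: (i) (x_1 + ⋯ + x_p)·l ≥ 0 for all 1 ≤ p ≤ s; (ii) the partial sums y_p = x_1 + ⋯ + x_p for 0 ≤ p ≤ s−1 (with y_0 = 0) are pairwise distinct; (iii) x_1 + ⋯ + x_s = 0. -/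
noncomputable section

/-- The natural embedding of the lattice `ℤ^d` into Euclidean space `ℝ^d`. -/
def emb (d : ℕ) (z : Fin d → ℤ) : EuclideanSpace ℝ (Fin d) := WithLp.toLp 2 (fun i => (z i : ℝ))

/-- A finite family `u 0, …, u (m-1)` of lattice vectors is *nice* if for every nonzero
direction `l ∈ ℝ^d` there is some `i` with `l · u i > 0`. -/
def IsNice (d m : ℕ) (u : Fin m → Fin d → ℤ) : Prop :=
  ∀ l : EuclideanSpace ℝ (Fin d), l ≠ 0 → ∃ i : Fin m, 0 < (inner ℝ l (emb d (u i)) : ℝ)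

/-!
Niceness says that `max_i ⟪l, u i⟫` is positive on the unit sphere, hence at least some `c > 0`
by compactness. So from every point `y` some step `u i` has `⟪y, u i⟫ ≤ -c ‖y‖`, and a walk from
the origin taking such steps never leaves a fixed ball. The ball holds finitely many lattice
points, so the walk closes up: this gives one word in the `u i` with sum zero, and its length is
the bound `N`. For a direction `l`, ordering the letters of that word by decreasing `⟪l, ·⟫`
keeps every partial sum in the half-space `⟪l, ·⟫ ≥ 0`; then, as long as two vertices of the
loop coincide, cutting out the subloop between them leaves a shorter loop of the same kind.
-/

open Finset

section NiceFamily

variable {E ι : Type*} [NormedAddCommGroup E] [InnerProductSpace ℝ E] [FiniteDimensional ℝ E]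
  [Fintype ι] [Nonempty ι] {v : ι → E}

theorem exists_pos_forall_exists_inner_le_neg_mul_norm
    (hv : ∀ l : E, l ≠ 0 → ∃ i, 0 < inner ℝ l (v i)) :
    ∃ c > 0, ∀ y : E, ∃ i, inner ℝ y (v i) ≤ -(c * ‖y‖) := by
  set g : E → ℝ := fun l => univ.sup' univ_nonempty fun i => inner ℝ l (v i)
  have hg : Continuous g :=
    Continuous.finset_sup'_apply univ_nonempty fun i _ => continuous_id.inner continuous_const
  obtain ⟨c, hc, hcg⟩ := (isCompact_sphere (0 : E) 1).exists_forall_le' hg.continuousOn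
    (a := 0) fun l hl => by
      obtain ⟨i, hi⟩ := hv l (ne_zero_of_mem_unit_sphere ⟨l, hl⟩)
      exact hi.trans_le (le_sup' (fun i => inner ℝ l (v i)) (mem_univ i))
  refine ⟨c, hc, fun y => ?_⟩
  rcases eq_or_ne y 0 with rfl | hy
  · exact ⟨Classical.arbitrary ι, by simp⟩
  have hy' : 0 < ‖y‖ := norm_pos_iff.mpr hy
  set l := -(‖y‖⁻¹ • y)
  obtain ⟨i, -, hi⟩ := exists_mem_eq_sup' univ_nonempty fun i => inner ℝ l (v i)
  refine ⟨i, ?_⟩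
  have hcl : c ≤ -(‖y‖⁻¹ * inner ℝ y (v i)) := by
    have := hcg l (by simp [l, norm_smul, hy'.ne'])
    rwa [← real_inner_smul_left, ← inner_neg_left, ← hi]
  have := mul_le_mul_of_nonneg_left hcl hy'.le
  rw [mul_neg, ← mul_assoc, mul_inv_cancel₀ hy'.ne', one_mul] at this
  linarith

theorem exists_forall_norm_le_exists_norm_add_le
    (hv : ∀ l : E, l ≠ 0 → ∃ i, 0 < inner ℝ l (v i)) :
    ∃ B, 0 ≤ B ∧ ∀ y : E, ‖y‖ ≤ B → ∃ i, ‖y + v i‖ ≤ B := by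
  obtain ⟨c, hc, hdir⟩ := exists_pos_forall_exists_inner_le_neg_mul_norm hv
  obtain ⟨U, hU⟩ := Finite.exists_le fun i => ‖v i‖
  have hU₀ : 0 ≤ U := (norm_nonneg _).trans (hU (Classical.arbitrary ι))
  refine ⟨U ^ 2 / (2 * c) + U, by positivity, fun y hy => ?_⟩
  obtain ⟨i, hi⟩ := hdir y
  refine ⟨i, ?_⟩
  rcases le_or_gt ‖y‖ (U ^ 2 / (2 * c)) with hsmall | hbig
  · exact (norm_add_le _ _).trans (add_le_add hsmall (hU i))
  have hU2 : ‖v i‖ ^ 2 < 2 * c * ‖y‖ := by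
    have := (div_lt_iff₀ (by positivity)).mp hbig
    nlinarith [hU i, norm_nonneg (v i)]
  have hsq : ‖y + v i‖ ^ 2 ≤ ‖y‖ ^ 2 := by
    rw [norm_add_sq_real]
    nlinarith
  exact ((pow_le_pow_iff_left₀ (norm_nonneg _) (norm_nonneg _) two_ne_zero).mp hsq).trans hy

end NiceFamily

theorem exists_sum_eq_zero_of_forall_add_mem {G ι : Type*} [AddCommGroup G] {u : ι → G}
    {S : Set G} (hS : S.Finite) {y₀ : G} (hy₀ : y₀ ∈ S) (hstep : ∀ y ∈ S, ∃ i, y + u i ∈ S) :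
    ∃ n > 0, ∃ z : Fin n → ι, ∑ j, u (z j) = 0 := by
  have := (hstep y₀ hy₀).nonempty
  choose! f hf using hstep
  set walk : ℕ → G := fun k => (fun y => y + u (f y))^[k] y₀
  have hwalk : ∀ k, walk (k + 1) = walk k + u (f (walk k)) := fun k =>
    Function.iterate_succ_apply' _ k y₀
  obtain ⟨p, q, hpq, hpq'⟩ := hS.exists_lt_map_eq_of_forall_mem (f := walk)
    fun k => (Set.MapsTo.iterate (f := fun y => y + u (f y)) hf k) hy₀
  refine ⟨q - p, by omega, fun j => f (walk (p + j)), ?_⟩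
  rw [Fin.sum_univ_eq_sum_range (fun j => u (f (walk (p + j))))]
  have := sum_range_sub (fun j => walk (p + j)) (q - p)
  simp only [← add_assoc, hwalk, add_sub_cancel_left, add_zero, Nat.add_sub_cancel' hpq.le] at this
  rw [this, hpq', sub_self]

theorem emb_zero (d : ℕ) : emb d 0 = 0 := by
  ext j; simp [emb]

theorem emb_add (d : ℕ) (a b : Fin d → ℤ) : emb d (a + b) = emb d a + emb d b := by
  ext j; simp [emb]

theorem finite_setOf_norm_emb_le (d : ℕ) (B : ℝ) : {y : Fin d → ℤ | ‖emb d y‖ ≤ B}.Finite := by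
  refine (isCompact_closedBall (0 : Fin d → ℤ) B).finite_of_discrete.subset fun y hy => ?_
  rw [mem_closedBall_zero_iff]
  refine le_trans ((pi_norm_le_iff_of_nonneg (norm_nonneg (emb d y))).mpr fun j => ?_) hy
  simpa [emb, Int.norm_eq_abs] using PiLp.norm_apply_le (emb d y) j

theorem IsNice.exists_sum_eq_zero {d m : ℕ} [Nonempty (Fin m)] {u : Fin m → Fin d → ℤ}
    (hu : IsNice d m u) : ∃ n > 0, ∃ z : Fin n → Fin m, ∑ j, u (z j) = 0 := by
  obtain ⟨B, hB, hball⟩ := exists_forall_norm_le_exists_norm_add_le (v := fun i => emb d (u i)) hu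
  refine exists_sum_eq_zero_of_forall_add_mem (finite_setOf_norm_emb_le d B) (y₀ := 0)
    (by simpa [emb_zero] using hB) fun y hy => ?_
  obtain ⟨i, hi⟩ := hball (emb d y) hy
  exact ⟨i, by simpa [emb_add] using hi⟩

theorem sum_range_nonneg_of_antitoneOn {α : Type*} [AddCommGroup α] [LinearOrder α]
    [IsOrderedAddMonoid α] {a : ℕ → α} {n p : ℕ} (ha : AntitoneOn a (Set.Iio n))
    (hsum : 0 ≤ ∑ i ∈ range n, a i) (hp : p ≤ n) : 0 ≤ ∑ i ∈ range p, a i := by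
  by_cases hpos : ∀ i < p, 0 ≤ a i
  · exact sum_nonneg fun i hi => hpos i (mem_range.mp hi)
  push Not at hpos
  obtain ⟨i, hip, hi⟩ := hpos
  have htail : ∑ j ∈ Ico p n, a j ≤ 0 := sum_nonpos fun j hj => by
    have hj := mem_Ico.mp hj
    exact (ha (by simp; omega) hj.2 (by omega)).trans hi.le
  rw [← sum_range_add_sum_Ico a hp] at hsum
  exact le_of_le_add_of_nonpos_left hsum htail

section ClosedWalk

variable {G ι : Type*} [AddCommGroup G] {u : ι → G} {P : G → Prop}

def IsClosedWalk (u : ι → G) (P : G → Prop) (s : ℕ) (x : ℕ → G) : Prop :=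
  (∀ j < s, ∃ i, x j = u i) ∧ (∀ p, 1 ≤ p → p ≤ s → P (∑ i ∈ range p, x i)) ∧
    ∑ i ∈ range s, x i = 0

theorem sum_range_ite_lt_of_le (x y : ℕ → G) {p r : ℕ} (hr : r ≤ p) :
    ∑ i ∈ range r, (if i < p then x i else y i) = ∑ i ∈ range r, x i :=
  sum_congr rfl fun _ hi => if_pos ((mem_range.mp hi).trans_le hr)

theorem sum_range_ite_lt_add_of_ge (x : ℕ → G) {p Δ r : ℕ}
    (heq : ∑ i ∈ range p, x i = ∑ i ∈ range (p + Δ), x i) (hr : p ≤ r) :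
    ∑ i ∈ range r, (if i < p then x i else x (i + Δ)) = ∑ i ∈ range (r + Δ), x i := by
  obtain ⟨k, rfl⟩ := Nat.exists_eq_add_of_le hr
  rw [sum_range_add, sum_range_ite_lt_of_le x (fun i => x (i + Δ)) le_rfl, heq,
    add_right_comm p k Δ, sum_range_add _ (p + Δ) k]
  congr 1
  refine sum_congr rfl fun i _ => ?_
  rw [if_neg (by omega), add_right_comm]

theorem IsClosedWalk.cut {s : ℕ} {x : ℕ → G} (hx : IsClosedWalk u P s x) {p Δ : ℕ}
    (hps : p + Δ ≤ s) (heq : ∑ i ∈ range p, x i = ∑ i ∈ range (p + Δ), x i) :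
    IsClosedWalk u P (s - Δ) fun j => if j < p then x j else x (j + Δ) := by
  obtain ⟨hstep, hP, hsum⟩ := hx
  refine ⟨fun j hj => ?_, fun r hr hrs => ?_, ?_⟩
  · dsimp only
    split_ifs
    exacts [hstep j (by omega), hstep (j + Δ) (by omega)]
  · rcases le_total r p with hrp | hpr
    · rw [sum_range_ite_lt_of_le _ _ hrp]
      exact hP r hr (by omega)
    · rw [sum_range_ite_lt_add_of_ge x heq hpr]
      exact hP (r + Δ) (by omega) (by omega)
  · rwa [sum_range_ite_lt_add_of_ge x heq (by omega), Nat.sub_add_cancel (by omega)]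

theorem IsClosedWalk.exists_partialSums_pairwise_ne {s : ℕ} {x : ℕ → G}
    (hx : IsClosedWalk u P s x) (hs : 0 < s) :
    ∃ t, 0 < t ∧ t ≤ s ∧ ∃ y, IsClosedWalk u P t y ∧
      ∀ p < t, ∀ q < t, p ≠ q → ∑ i ∈ range p, y i ≠ ∑ i ∈ range q, y i := by
  induction s using Nat.strong_induction_on generalizing x with
  | _ s ih =>
  by_cases hinj : ∀ p < s, ∀ q < s, p ≠ q → ∑ i ∈ range p, x i ≠ ∑ i ∈ range q, x i
  · exact ⟨s, hs, le_rfl, x, hx, hinj⟩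
  obtain ⟨p, q, hpq, hqs, heq⟩ :
      ∃ p q, p < q ∧ q < s ∧ ∑ i ∈ range p, x i = ∑ i ∈ range q, x i := by
    push Not at hinj
    obtain ⟨p, hp, q, hq, hne, heq⟩ := hinj
    rcases hne.lt_or_gt with hlt | hlt
    exacts [⟨p, q, hlt, hq, heq⟩, ⟨q, p, hlt, hp, heq.symm⟩]
  have hcut := hx.cut (p := p) (Δ := q - p) (by omega) (by rwa [Nat.add_sub_cancel' hpq.le])
  obtain ⟨t, ht, hts, y, hy⟩ := ih (s - (q - p)) (by omega) hcut (by omega)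
  exact ⟨t, ht, hts.trans (by omega), y, hy⟩

theorem exists_isClosedWalk_nonneg_of_sum_eq_zero (φ : G →+ ℝ) {n : ℕ}
    (z : Fin n → ι) (hz : ∑ j, u (z j) = 0) :
    ∃ x, IsClosedWalk u (fun y => 0 ≤ φ y) n x := by
  set σ := Tuple.sort fun j => -φ (u (z j))
  have hσ := Tuple.monotone_sort fun j => -φ (u (z j))
  set x : ℕ → G := fun j => if h : j < n then u (z (σ ⟨j, h⟩)) else 0
  have hsum : ∑ i ∈ range n, x i = 0 := by
    rw [← Fin.sum_univ_eq_sum_range]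
    simp only [x, Fin.is_lt, dif_pos, Fin.eta]
    rw [Equiv.sum_comp σ fun j => u (z j), hz]
  refine ⟨x, fun j hj => ⟨_, dif_pos hj⟩, fun p _ hp => ?_, hsum⟩
  show 0 ≤ φ _
  rw [map_sum]
  refine sum_range_nonneg_of_antitoneOn (fun i hi j hj hij => ?_)
    (by rw [← map_sum, hsum, map_zero]) hp
  simp only [x, dif_pos (Set.mem_Iio.mp hi), dif_pos (Set.mem_Iio.mp hj)]
  exact neg_le_neg_iff.mp (hσ (Fin.mk_le_mk.mpr hij))

end ClosedWalk

theorem nice_set_loop_in_halfspace_general {d m : ℕ}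
    (u : Fin m → Fin d → ℤ) (hnice : IsNice d m u) :
    ∃ N : ℕ, ∀ l : EuclideanSpace ℝ (Fin d), ‖l‖ = 1 →
      ∃ s : ℕ, 0 < s ∧ s ≤ N ∧ ∃ x : ℕ → Fin d → ℤ,
        (∀ j < s, ∃ i : Fin m, x j = u i) ∧
        (∀ p, 1 ≤ p → p ≤ s → 0 ≤ (inner ℝ l (emb d (∑ i ∈ Finset.range p, x i)) : ℝ)) ∧
        (∀ p < s, ∀ q < s, p ≠ q →
          ∑ i ∈ Finset.range p, x i ≠ ∑ i ∈ Finset.range q, x i) ∧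
        ∑ i ∈ Finset.range s, x i = 0 := by
  cases isEmpty_or_nonempty (Fin m) with
  | inl _ =>
    refine ⟨0, fun l hl => isEmptyElim (hnice l ?_).choose⟩
    rintro rfl
    simp at hl
  | inr _ =>
    obtain ⟨n, hn, z, hz⟩ := hnice.exists_sum_eq_zero
    refine ⟨n, fun l _ => ?_⟩
    let φ : (Fin d → ℤ) →+ ℝ := AddMonoidHom.mk' (fun y => inner ℝ l (emb d y)) fun a b => by
      rw [emb_add, inner_add_right]
    obtain ⟨x, hx⟩ := exists_isClosedWalk_nonneg_of_sum_eq_zero φ z hz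
    obtain ⟨s, hs, hsn, y, ⟨hstep, hhalf, hsum⟩, hinj⟩ := hx.exists_partialSums_pairwise_ne hn
    exact ⟨s, hs, hsn, y, hstep, hhalf, hinj, hsum⟩

/-- for a nice set of non-zero vectors there is a uniform bound `N` such
that in any direction `l` there is a loop of at most `N` steps, using only vectors from the
nice set, staying in the half-space `{v : v · l ≥ 0}`, with pairwise distinct intermediate
points, and returning to the origin. -/
theorem nice_set_loop_in_halfspace {d m : ℕ} (hd : 0 < d)
    (u : Fin m → Fin d → ℤ) (hu : ∀ i, u i ≠ 0) (hnice : IsNice d m u) :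
    ∃ N : ℕ, ∀ l : EuclideanSpace ℝ (Fin d), ‖l‖ = 1 →
      ∃ s : ℕ, 0 < s ∧ s ≤ N ∧ ∃ x : ℕ → Fin d → ℤ,
        (∀ j < s, ∃ i : Fin m, x j = u i) ∧
        (∀ p, 1 ≤ p → p ≤ s → 0 ≤ (inner ℝ l (emb d (∑ i ∈ Finset.range p, x i)) : ℝ)) ∧
        (∀ p < s, ∀ q < s, p ≠ q →
          ∑ i ∈ Finset.range p, x i ≠ ∑ i ∈ Finset.range q, x i) ∧
        ∑ i ∈ Finset.range s, x i = 0 :=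
  nice_set_loop_in_halfspace_general u hnice
end
end

section
/- Let r ∈ ℕ, c ∈ ℝ, and let δ : ℕ × (0,∞) → ℝ be a function with δ(n,k) ≤ 0 for all n and k, satisfying: for all real numbers 0 < k < k' and all integers m ≥ 1 and n ≥ r·k'/(k'−k), one has δ(m+n, k) ≥ c + δ(m, k) + δ(n−r, k'). Then for all 0 < k < k': liminf_{n→∞} δ(n,k)/n ≥ limsup_{n→∞} δ(n,k')/n. In particular, setting δ̲(k) = liminf_{n→∞} δ(n,k)/n and δ̄(k) = limsup_{n→∞} δ(n,k)/n, one has δ̲(k') ≤ δ̄(k') ≤ δ̲(k) ≤ δ̄(k) whenever k < k', so both δ̲ and δ̄ are non-increasing. -/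
/-!
Fix `0 < k < k'` and `n ≥ r k' / (k' - k)`. Applied to `n + r`, the hypothesis says that
`m ↦ δ(m, k)` gains at least `a := c + δ(n, k')` whenever its argument is shifted by `p := n + r`.
Iterating along residue classes mod `p` gives `δ(N, k) ≥ (a / p) N - O(1)`, hence
`L := liminf δ(N, k)/N ≥ (c + δ(n, k'))/(n + r)`, that is `δ(n, k')/n ≤ L + O(1/n)` for all
large `n`.
-/

open Filter Topology

namespace EReal

variable {α : Type*} {l : Filter α} [NeBot l] {u v : α → ℝ} {ℓ : ℝ}

theorem le_liminf_coe_of_eventually_le_of_tendsto (hvu : ∀ᶠ x in l, v x ≤ u x)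
    (hv : Tendsto v l (𝓝 ℓ)) : (ℓ : EReal) ≤ liminf (fun x => (u x : EReal)) l := by
  rw [← (tendsto_coe.mpr hv).liminf_eq]
  exact liminf_le_liminf (hvu.mono fun _ h => EReal.coe_le_coe_iff.mpr h)

theorem limsup_coe_le_of_eventually_le_of_tendsto (huv : ∀ᶠ x in l, u x ≤ v x)
    (hv : Tendsto v l (𝓝 ℓ)) : limsup (fun x => (u x : EReal)) l ≤ ℓ := by
  rw [← (tendsto_coe.mpr hv).limsup_eq]
  exact limsup_le_limsup (huv.mono fun _ h => EReal.coe_le_coe_iff.mpr h)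

end EReal

section ShiftGain

variable {f : ℕ → ℝ} {a : ℝ} {p : ℕ}

theorem natCast_mul_add_le_of_add_le_shift (h : ∀ m, 1 ≤ m → a + f m ≤ f (m + p)) (t : ℕ) {m : ℕ}
    (hm : 1 ≤ m) : t * a + f m ≤ f (m + t * p) := by
  induction t with
  | zero => simp
  | succ t ih =>
    have step := h (m + t * p) (hm.trans (Nat.le_add_right _ _))
    rw [show m + (t + 1) * p = m + t * p + p by ring]
    push_cast
    linarith

theorem exists_linear_le_of_add_le_shift (hp : 0 < p) (h : ∀ m, 1 ≤ m → a + f m ≤ f (m + p)) :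
    ∃ C, ∀ N, 1 ≤ N → a / p * N + C ≤ f N := by
  have hIcc : (Finset.Icc 1 p).Nonempty := ⟨1, Finset.mem_Icc.mpr ⟨le_rfl, hp⟩⟩
  set B := (Finset.Icc 1 p).inf' hIcc f
  refine ⟨B - |a|, fun N hN => ?_⟩
  -- `N = (s + 1) + t p` with `1 ≤ s + 1 ≤ p`, so `f N ≥ t a + B` and `|t - N / p| ≤ 1`.
  have hN_eq : (N - 1) % p + 1 + (N - 1) / p * p = N := by
    have := Nat.div_add_mod' (N - 1) p
    omega
  set t := (N - 1) / p
  set s := (N - 1) % p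
  have hs : s + 1 ≤ p := Nat.mod_lt _ hp
  have hiter := natCast_mul_add_le_of_add_le_shift h t (Nat.le_add_left 1 s)
  rw [hN_eq] at hiter
  have hB : B ≤ f (s + 1) := Finset.inf'_le _ (Finset.mem_Icc.mpr ⟨Nat.le_add_left 1 s, hs⟩)
  have hdist : |(t : ℝ) - N / p| ≤ 1 := by
    have hp' : (0 : ℝ) < p := by exact_mod_cast hp
    have : (t : ℝ) - N / p = -((s + 1 : ℝ) / p) := by
      rw [← hN_eq]; push_cast; field_simp; ring
    rw [this, abs_neg, abs_of_nonneg (by positivity), div_le_one hp']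
    exact_mod_cast hs
  have herr : -|a| ≤ (t - N / p) * a :=
    calc -|a| ≤ -(|(t : ℝ) - N / p| * |a|) :=
          neg_le_neg (mul_le_of_le_one_left (abs_nonneg a) hdist)
      _ = -|(t - N / p) * a| := by rw [abs_mul]
      _ ≤ (t - N / p) * a := neg_abs_le _
  have : a / p * N = t * a - (t - N / p) * a := by ring
  linarith

theorem le_liminf_div_of_add_le_shift (hp : 0 < p) (h : ∀ m, 1 ≤ m → a + f m ≤ f (m + p)) :
    ((a / p : ℝ) : EReal) ≤ liminf (fun N : ℕ => ((f N / N : ℝ) : EReal)) atTop := by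
  obtain ⟨C, hC⟩ := exists_linear_le_of_add_le_shift hp h
  refine EReal.le_liminf_coe_of_eventually_le_of_tendsto (v := fun N : ℕ => a / p + C / N) ?_ ?_
  · filter_upwards [eventually_ge_atTop 1] with N hN
    have hN' : (0 : ℝ) < N := by exact_mod_cast hN
    rw [le_div_iff₀ hN', add_mul, div_mul_cancel₀ _ hN'.ne']
    exact hC N hN
  · simpa using tendsto_const_nhds.add (tendsto_const_div_atTop_nhds_zero_nat C)

end ShiftGain

theorem limsup_div_le_of_eventually_add_div_add_le {g : ℕ → ℝ} {c : ℝ} {r : ℕ} {L : EReal}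
    (h : ∀ᶠ n : ℕ in atTop, (((c + g n) / (n + r) : ℝ) : EReal) ≤ L) :
    limsup (fun n : ℕ => ((g n / n : ℝ) : EReal)) atTop ≤ L := by
  induction L using EReal.rec with
  | bot =>
    obtain ⟨n, hn⟩ := h.exists
    simp at hn
  | top => exact le_top
  | coe ℓ =>
    refine EReal.limsup_coe_le_of_eventually_le_of_tendsto (v := fun n : ℕ => ℓ + (ℓ * r - c) / n)
      ?_ ?_
    · filter_upwards [h, eventually_ge_atTop 1] with n hn hn1
      have hn' : (0 : ℝ) < n := by exact_mod_cast hn1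
      rw [EReal.coe_le_coe_iff, div_le_iff₀ (by positivity)] at hn
      rw [div_le_iff₀ hn', add_mul, div_mul_cancel₀ _ hn'.ne']
      linarith
    · simpa using tendsto_const_nhds.add (tendsto_const_div_atTop_nhds_zero_nat (ℓ * r - c))

theorem generalized_subadditive_lemma_general (r : ℕ) (c : ℝ) (δ : ℕ → ℝ → ℝ)
    (hsub : ∀ k k' : ℝ, 0 < k → k < k' → ∀ m n : ℕ, 1 ≤ m →
      (r : ℝ) * k' / (k' - k) ≤ (n : ℝ) → c + δ m k + δ (n - r) k' ≤ δ (m + n) k) :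
    ∀ k k' : ℝ, 0 < k → k < k' →
      Filter.liminf (fun n : ℕ => ((δ n k' / n : ℝ) : EReal)) Filter.atTop ≤
          Filter.limsup (fun n : ℕ => ((δ n k' / n : ℝ) : EReal)) Filter.atTop ∧
        Filter.limsup (fun n : ℕ => ((δ n k' / n : ℝ) : EReal)) Filter.atTop ≤
          Filter.liminf (fun n : ℕ => ((δ n k / n : ℝ) : EReal)) Filter.atTop ∧
        Filter.liminf (fun n : ℕ => ((δ n k / n : ℝ) : EReal)) Filter.atTop ≤
          Filter.limsup (fun n : ℕ => ((δ n k / n : ℝ) : EReal)) Filter.atTop := by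
  intro k k' hk hkk'
  refine ⟨liminf_le_limsup, limsup_div_le_of_eventually_add_div_add_le (c := c) (r := r) ?_,
    liminf_le_limsup⟩
  filter_upwards [eventually_ge_atTop ⌈(r : ℝ) * k' / (k' - k)⌉₊, eventually_ge_atTop 1]
    with n hn hn1
  have hshift : ∀ m, 1 ≤ m → (c + δ n k') + δ m k ≤ δ (m + (n + r)) k := by
    intro m hm
    have hadm : (r : ℝ) * k' / (k' - k) ≤ ((n + r : ℕ) : ℝ) :=
      (Nat.ceil_le.mp hn).trans (by exact_mod_cast Nat.le_add_right n r)
    have := hsub k k' hk hkk' m (n + r) hm hadm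
    rw [Nat.add_sub_cancel] at this
    linarith
  simpa using le_liminf_div_of_add_le_shift (by omega) hshift

/-- deterministic generalized subadditive lemma: if
`δ : ℕ × (0,∞) → ℝ` is nonpositive and satisfies
`δ(m+n, k) ≥ c + δ(m, k) + δ(n−r, k')` for all `0 < k < k'`, `m ≥ 1` and
`n ≥ r k' / (k' − k)`, then for all `0 < k < k'` one has
`liminf δ(n,k')/n ≤ limsup δ(n,k')/n ≤ liminf δ(n,k)/n ≤ limsup δ(n,k)/n`. -/
theorem generalized_subadditive_lemma (r : ℕ) (c : ℝ) (δ : ℕ → ℝ → ℝ)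
    (hneg : ∀ (n : ℕ) (k : ℝ), 0 < k → δ n k ≤ 0)
    (hsub : ∀ k k' : ℝ, 0 < k → k < k' → ∀ m n : ℕ, 1 ≤ m →
      (r : ℝ) * k' / (k' - k) ≤ (n : ℝ) → c + δ m k + δ (n - r) k' ≤ δ (m + n) k) :
    ∀ k k' : ℝ, 0 < k → k < k' →
      Filter.liminf (fun n : ℕ => ((δ n k' / n : ℝ) : EReal)) Filter.atTop ≤
          Filter.limsup (fun n : ℕ => ((δ n k' / n : ℝ) : EReal)) Filter.atTop ∧
        Filter.limsup (fun n : ℕ => ((δ n k' / n : ℝ) : EReal)) Filter.atTop ≤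
          Filter.liminf (fun n : ℕ => ((δ n k / n : ℝ) : EReal)) Filter.atTop ∧
        Filter.liminf (fun n : ℕ => ((δ n k / n : ℝ) : EReal)) Filter.atTop ≤
          Filter.limsup (fun n : ℕ => ((δ n k / n : ℝ) : EReal)) Filter.atTop :=
  generalized_subadditive_lemma_general r c δ hsub
end
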